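/- arXiv:1508.07271 — 2 statements merged into one kernel-verified Lean document; each statement's English description precedes it below -/
import Mathlib

section
/- Let R be a finite open random cover of E and Q a random cover of E. Then the function ω ↦ N(R | Q)(ω) is measurable on Ω. -/
open MeasureTheory Set Filter Topology
open scoped ENNReal

namespace RelTail

variable {Ω W : Type*}

/-- The fiber over `ω` of a subset of a product space. -/
def fib (E : Set (Ω × W)) (ω : Ω) : Set W := {x | (ω, x) ∈ E}

/-- Minimal cardinality of a subfamily of the cover `R` whose fibers at `ω` cover the
fiber of `S` at `ω` (with the convention that the empty set needs one element). -/
noncomputable def coverNum (S : Set (Ω × W)) (R : Set (Set (Ω × W))) (ω : Ω) : ℕ :=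
  max 1 (sInf {n : ℕ | ∃ F : Finset (Set (Ω × W)), ↑F ⊆ R ∧ F.card = n ∧
    fib S ω ⊆ ⋃ u ∈ F, fib u ω})

/-- `N(R | Q)(ω) = max_{q ∈ Q} N(q, R)(ω)`. -/
noncomputable def relCoverNum (R Q : Set (Set (Ω × W))) (ω : Ω) : ℕ :=
  ⨆ q ∈ Q, coverNum q R ω

section Meas
variable [MeasurableSpace Ω] [MeasurableSpace W]

/-- A (finite or countable) random cover of `E`. -/
def IsRandomCover (E : Set (Ω × W)) (Q : Set (Set (Ω × W))) : Prop :=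
  Q.Countable ∧ (∀ q ∈ Q, MeasurableSet q) ∧ (∀ q ∈ Q, q ⊆ E) ∧
    ∀ ω, fib E ω ⊆ ⋃ q ∈ Q, fib q ω

/-- An open random cover: a random cover whose fibers are (a.e.) open in the fibers of `E`. -/
def IsOpenRandomCover [TopologicalSpace W] (P : Measure Ω) (E : Set (Ω × W))
    (Q : Set (Set (Ω × W))) : Prop :=
  IsRandomCover E Q ∧
    ∀ q ∈ Q, ∀ᵐ ω ∂P, ∃ U : Set W, IsOpen U ∧ fib q ω = U ∩ fib E ω

end Meas

/-- The join `⋁_{i<n} (Γ^i)^{-1} Q` of a cover (or partition). -/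
def iterJoin {Z : Type*} (Γ : Z → Z) (Q : Set (Set Z)) (n : ℕ) : Set (Set Z) :=
  {s | ∃ f : ℕ → Set Z, (∀ i, f i ∈ Q) ∧ s = ⋂ i ∈ Finset.range n, (Γ^[i]) ⁻¹' (f i)}

/-- `log N(R^{(n)} | Q^{(n)})(ω)`. -/
noncomputable def iterCoverLog (Θ : Ω × W → Ω × W) (R Q : Set (Set (Ω × W))) (n : ℕ)
    (ω : Ω) : ℝ :=
  Real.log (relCoverNum (iterJoin Θ R n) (iterJoin Θ Q n) ω)

/-- The relative tail entropy `h_Θ(R|Q)` of an open random cover `R` w.r.t. a random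
cover `Q`, as a limit (limsup) of `(1/n) ∫ log N(R^{(n)}|Q^{(n)}) dP`. -/
noncomputable def relCoverEnt [MeasurableSpace Ω] (P : Measure Ω) (Θ : Ω × W → Ω × W)
    (R Q : Set (Set (Ω × W))) : ℝ≥0∞ :=
  Filter.atTop.limsup fun n : ℕ => ENNReal.ofReal ((∫ ω, iterCoverLog Θ R Q n ω ∂P) / n)

/-- `h(Θ|Q)`: supremum over all open random covers `R` of `h_Θ(R|Q)`. -/
noncomputable def condTailEnt [MeasurableSpace Ω] [MeasurableSpace W] [TopologicalSpace W]
    (P : Measure Ω) (E : Set (Ω × W)) (Θ : Ω × W → Ω × W) (Q : Set (Set (Ω × W))) : ℝ≥0∞ :=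
  ⨆ R ∈ {R | IsOpenRandomCover P E R}, relCoverEnt P Θ R Q

/-- The relative tail entropy `h*(Θ)`: infimum over all random covers `Q` of `h(Θ|Q)`. -/
noncomputable def tailEnt [MeasurableSpace Ω] [MeasurableSpace W] [TopologicalSpace W]
    (P : Measure Ω) (E : Set (Ω × W)) (Θ : Ω × W → Ω × W) : ℝ≥0∞ :=
  ⨅ Q ∈ {Q | IsRandomCover E Q}, condTailEnt P E Θ Q

/-- The skew product transformation of a bundle RDS. -/
def skew (ϑ : Ω → Ω) (T : Ω → W → W) : Ω × W → Ω × W := fun p => (ϑ p.1, T p.1 p.2)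

/-- A continuous bundle random dynamical system over `(Ω, P, ϑ)` on `E`. -/
structure IsBundleRDS [MeasurableSpace Ω] [MeasurableSpace W] [TopologicalSpace W]
    (P : Measure Ω) (ϑ : Ω → Ω) (E : Set (Ω × W)) (T : Ω → W → W) : Prop where
  measurePreserving : MeasurePreserving ϑ P P
  measurable : Measurable fun p : Ω × W => T p.1 p.2
  mapsTo : ∀ ω, MapsTo (T ω) (fib E ω) (fib E (ϑ ω))
  continuousOn : ∀ᵐ ω ∂P, ContinuousOn (T ω) (fib E ω)

/-- A finite or countable measurable partition of a set `E`. -/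
def IsCountablePartition {Z : Type*} [MeasurableSpace Z] (E : Set Z) (R : Set (Set Z)) : Prop :=
  R.Countable ∧ (∀ s ∈ R, MeasurableSet s) ∧ (∀ s ∈ R, s ⊆ E) ∧
    R.PairwiseDisjoint id ∧ ⋃₀ R = E

/-- The conditional entropy `H_μ(R | m)` of a countable partition `R` given a
sub-σ-algebra `m`, via conditional expectations. -/
noncomputable def partCondEntropy {Z : Type*} (m : MeasurableSpace Z) [MeasurableSpace Z]
    (μ : Measure Z) (R : Set (Set Z)) : ℝ≥0∞ :=
  ∑' r : R, ENNReal.ofReal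
    (∫ z, Real.negMulLog ((μ[(r : Set Z).indicator (fun _ => (1 : ℝ)) | m]) z) ∂μ)

/-- The relative entropy `h_μ(R | m)` of the transformation `Γ` with respect to a
partition `R`, given the sub-σ-algebra `m`. -/
noncomputable def relEntPart {Z : Type*} (m : MeasurableSpace Z) [MeasurableSpace Z]
    (μ : Measure Z) (Γ : Z → Z) (R : Set (Set Z)) : ℝ≥0∞ :=
  Filter.atTop.limsup fun n : ℕ => partCondEntropy m μ (iterJoin Γ R n) / (n : ℝ≥0∞)

/-- The relative entropy `h_μ(Γ | m)` given the sub-σ-algebra `m`: supremum over all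
countable measurable partitions of `E` of finite conditional entropy. -/
noncomputable def relEnt {Z : Type*} (m : MeasurableSpace Z) [MeasurableSpace Z]
    (μ : Measure Z) (Γ : Z → Z) (E : Set Z) : ℝ≥0∞ :=
  ⨆ R ∈ {R | IsCountablePartition E R ∧ partCondEntropy m μ R ≠ ∞}, relEntPart m μ Γ R

/-- The fiberwise boundary `{(ω,x) : x ∈ ∂(R(ω))}` of a subset of a product space. -/
def fibFrontier [TopologicalSpace W] (R : Set (Ω × W)) : Set (Ω × W) :=
  {p | p.2 ∈ frontier (fib R p.1)}

/-- The sub-σ-algebra of `Ω × W₁ × W₂` generated by the first two coordinates,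
i.e. the σ-algebra `{(A × W₂) ∩ ⬝ : A ∈ F × B}`. -/
def firstPairSigma (Ω W₁ W₂ : Type*) [MeasurableSpace Ω] [MeasurableSpace W₁] :
    MeasurableSpace (Ω × W₁ × W₂) :=
  MeasurableSpace.comap (fun p : Ω × W₁ × W₂ => (p.1, p.2.1)) inferInstance

/-- The defect of upper semi-continuity of `f` at `m` relative to the set `S`. -/
noncomputable def uscDefect {M : Type*} [TopologicalSpace M] (f : M → ℝ≥0∞) (S : Set M)
    (m : M) : ℝ≥0∞ :=
  if f m ≠ ∞ then Filter.limsup f (𝓝[S] m) - f m else ∞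

/-- The factor (extension) transformation `(ω, y) ↦ (ω, π_ω y)`. -/
def factorMap {Y X : Type*} (πf : Ω → Y → X) : Ω × Y → Ω × X :=
  fun p => (p.1, πf p.1 p.2)

/-- `T` on `E` is a factor of `S` on `G` via the family `π_ω`. -/
structure IsFactor {Ω X Y : Type*} [MeasurableSpace Ω] [MeasurableSpace X] [MeasurableSpace Y]
    [TopologicalSpace X] [TopologicalSpace Y] (ϑ : Ω → Ω) (E : Set (Ω × X)) (G : Set (Ω × Y))
    (T : Ω → X → X) (S : Ω → Y → Y) (πf : Ω → Y → X) : Prop where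
  measurable : Measurable fun p : Ω × Y => πf p.1 p.2
  mapsTo : ∀ ω, MapsTo (πf ω) (fib G ω) (fib E ω)
  surjOn : ∀ ω, SurjOn (πf ω) (fib G ω) (fib E ω)
  continuousOn : ∀ ω, ContinuousOn (πf ω) (fib G ω)
  semiconj : ∀ ω, ∀ y ∈ fib G ω, πf (ϑ ω) (S ω y) = T ω (πf ω y)

/-!
The event `{N(q, R) ≤ n}` is a finite union, over subfamilies `F ⊆ R` with at most `n` members,
of the events `{q(ω) ⊆ ⋃ F(ω)}`, and the complement of such an event is the projection to `Ω` of
the measurable set `q \ ⋃ F`. Encoding a countable generating family of `Ω` by a map into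
the Cantor space, this projection becomes the preimage of an analytic set. Analytic sets are
null-measurable, being inner regular by compact sets (the capacitability argument on
`ℕ → ℕ`), so the projection is measurable for the complete measure `P`. Finally
`N(R | Q) ≤ n` iff `N(q, R) ≤ n` for each of the countably many `q ∈ Q`, the supremum being
bounded by `|R|`.
-/

section AnalyticSet

variable {C : Type*}

lemma _root_.measure_image_eq_iSup_inter_le {α : Type*} [MeasurableSpace C] (μ : Measure C)
    (f : α → C) (g : α → ℕ) (s : Set α) : μ (f '' s) = ⨆ m : ℕ, μ (f '' (s ∩ {x | g x ≤ m})) := by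
  have hmono : Monotone fun m : ℕ => f '' (s ∩ {x | g x ≤ m}) :=
    fun a b hab => image_mono (inter_subset_inter_right _ fun x hx => le_trans hx hab)
  -- continuity from below holds for arbitrary, not necessarily measurable, sets
  rw [← hmono.measure_iUnion, ← image_iUnion, ← inter_iUnion,
    iUnion_eq_univ_iff.2 fun x => ⟨g x, (le_rfl : g x ≤ g x)⟩, inter_univ]

lemma _root_.exists_lt_measure_image_pi_Iic [MeasurableSpace C] (μ : Measure C)
    (f : (ℕ → ℕ) → C) {c : ℝ≥0∞} (hc : c < μ (range f)) :
    ∃ n : ℕ → ℕ, ∀ k, c < μ (f '' (Iio k).pi fun i => Iic (n i)) := by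
  have step : ∀ (s : Set (ℕ → ℕ)) (k : ℕ), c < μ (f '' s) →
      ∃ m, c < μ (f '' (s ∩ {x | x k ≤ m})) := by
    intro s k hs
    rw [measure_image_eq_iSup_inter_le μ f (· k)] at hs
    exact lt_iSup_iff.1 hs
  choose! m hm using step
  let S : ℕ → Set (ℕ → ℕ) := fun k => Nat.rec univ (fun k s => s ∩ {x | x k ≤ m s k}) k
  have hS : ∀ k, c < μ (f '' S k) := by
    intro k
    induction k with
    | zero => simpa [S] using hc
    | succ k ih => exact hm _ _ ih
  refine ⟨fun i => m (S i) i, fun k => (hS k).trans_le (measure_mono (image_mono ?_))⟩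
  induction k with
  | zero => simp
  | succ k ih =>
    rintro x ⟨hx, hxk⟩
    simp only [Set.mem_pi, mem_Iio, mem_Iic, Nat.forall_lt_succ_right]
    exact ⟨ih hx, hxk⟩

lemma _root_.exists_tendsto_subseq_of_eventually_le {x : ℕ → ℕ → ℕ} {n : ℕ → ℕ}
    (hx : ∀ i, ∀ᶠ k in atTop, x k i ≤ n i) :
    ∃ a ∈ univ.pi fun i => Iic (n i), ∃ φ : ℕ → ℕ,
      StrictMono φ ∧ Tendsto (x ∘ φ) atTop (𝓝 a) := by
  have hbdd : ∀ i, BddAbove (range fun k => x k i) := fun i =>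
    (isBoundedUnder_of_eventually_le (hx i)).bddAbove_range
  choose m hm using hbdd
  obtain ⟨a, -, φ, hφ, hlim⟩ :=
    (isCompact_univ_pi fun i => (finite_Iic (m i)).isCompact).tendsto_subseq (x := x)
      fun k i _ => mem_Iic.2 (hm i ⟨k, rfl⟩)
  refine ⟨a, fun i _ => ?_, φ, hφ, hlim⟩
  exact le_of_tendsto (((continuous_apply i).tendsto a).comp hlim)
    (hφ.tendsto_atTop.eventually (hx i))

variable [TopologicalSpace C]

lemma _root_.iInter_closure_image_pi_Iic_subset [T2Space C] [FirstCountableTopology C]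
    {f : (ℕ → ℕ) → C} (hf : Continuous f) (n : ℕ → ℕ) :
    ⋂ k, closure (f '' (Iio k).pi fun i => Iic (n i)) ⊆ f '' univ.pi fun i => Iic (n i) := by
  intro y hy
  obtain ⟨B, hB⟩ := (𝓝 y).exists_antitone_basis
  have happrox : ∀ k, ∃ x ∈ (Iio k).pi fun i => Iic (n i), f x ∈ B k := fun k => by
    obtain ⟨_, hfx, x, hx, rfl⟩ := mem_closure_iff_nhds.1 (mem_iInter.1 hy k) (B k) (hB.mem k)
    exact ⟨x, hx, hfx⟩
  choose x hxM hxB using happrox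
  obtain ⟨a, ha, φ, hφ, hlim⟩ := exists_tendsto_subseq_of_eventually_le (x := x) (n := n)
    fun i => (eventually_gt_atTop i).mono fun k hk => hxM k i hk
  exact ⟨a, ha, tendsto_nhds_unique ((hf.tendsto a).comp hlim)
    ((hB.tendsto hxB).comp hφ.tendsto_atTop)⟩

variable [T2Space C] [FirstCountableTopology C] [MeasurableSpace C] [OpensMeasurableSpace C]

theorem _root_.MeasureTheory.AnalyticSet.exists_isCompact_subset_lt_measure (μ : Measure C)
    [IsFiniteMeasure μ] {A : Set C} (hA : AnalyticSet A) {c : ℝ≥0∞} (hc : c < μ A) :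
    ∃ K ⊆ A, IsCompact K ∧ c < μ K := by
  rw [AnalyticSet] at hA
  obtain rfl | ⟨f, hf, rfl⟩ := hA
  · simp at hc
  obtain ⟨c', hcc', hc'⟩ := exists_between hc
  obtain ⟨n, hn⟩ := exists_lt_measure_image_pi_Iic μ f hc'
  refine ⟨f '' univ.pi fun i => Iic (n i), image_subset_range _ _,
    (isCompact_univ_pi fun i => (finite_Iic (n i)).isCompact).image hf, hcc'.trans_le ?_⟩
  have hanti : Antitone fun k => closure (f '' (Iio k).pi fun i => Iic (n i)) :=
    fun a b hab => closure_mono (image_mono fun x hx i hi => hx i (lt_of_lt_of_le hi hab))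
  calc c' ≤ ⨅ k, μ (closure (f '' (Iio k).pi fun i => Iic (n i))) :=
        le_iInf fun k => (hn k).le.trans (measure_mono subset_closure)
    _ = μ (⋂ k, closure (f '' (Iio k).pi fun i => Iic (n i))) :=
        (hanti.measure_iInter (fun _ => isClosed_closure.nullMeasurableSet)
          ⟨0, measure_ne_top _ _⟩).symm
    _ ≤ _ := measure_mono (iInter_closure_image_pi_Iic_subset hf n)

theorem _root_.MeasureTheory.AnalyticSet.nullMeasurableSet (μ : Measure C) [IsFiniteMeasure μ]
    {A : Set C} (hA : AnalyticSet A) : NullMeasurableSet A μ := by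
  rcases eq_or_ne (μ A) 0 with h0 | h0
  · exact .of_null h0
  obtain ⟨u, -, hu, hlim⟩ := exists_seq_strictMono_tendsto' h0.bot_lt
  choose K hKA hK hKu using fun k => hA.exists_isCompact_subset_lt_measure μ (hu k).2
  have hB : MeasurableSet (⋃ k, K k) := .iUnion fun k => (hK k).isClosed.measurableSet
  have hle : μ A ≤ μ (⋃ k, K k) :=
    le_of_tendsto' hlim fun k => (hKu k).le.trans (measure_mono (subset_iUnion K k))
  exact hB.nullMeasurableSet.congr
    (ae_eq_of_subset_of_measure_ge (iUnion_subset hKA) hle hB.nullMeasurableSet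
      (measure_ne_top μ A))

end AnalyticSet

section Projection

open MeasurableSpace in
theorem _root_.MeasurableSpace.comap_mapNatBool (α : Type*) [m : MeasurableSpace α]
    [CountablyGenerated α] : MeasurableSpace.comap (mapNatBool α) inferInstance = m := by
  refine le_antisymm (measurable_mapNatBool α).comap_le ?_
  conv_lhs => rw [← generateFrom_natGeneratingSequence α]
  refine generateFrom_le ?_
  rintro _ ⟨n, rfl⟩
  refine ⟨(fun y : ℕ → Bool => y n) ⁻¹' {true},
    measurable_pi_apply n (measurableSet_singleton true), ?_⟩
  ext x
  simp [mapNatBool]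

theorem _root_.measurableSet_image_fst_of_isComplete {α X : Type*} [MeasurableSpace α]
    [MeasurableSpace.CountablyGenerated α] [TopologicalSpace X] [PolishSpace X]
    [MeasurableSpace X] [BorelSpace X] (μ : Measure α) [IsFiniteMeasure μ] [μ.IsComplete]
    {s : Set (α × X)} (hs : MeasurableSet s) : MeasurableSet (Prod.fst '' s) := by
  set φ := MeasurableSpace.mapNatBool α
  have hφ : Measurable φ := MeasurableSpace.measurable_mapNatBool α
  have hcomap : MeasurableSpace.comap (Prod.map φ id) inferInstance =
      (inferInstance : MeasurableSpace (α × X)) := by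
    rw [Prod.instMeasurableSpace, Prod.instMeasurableSpace, MeasurableSpace.comap_prodMap,
      MeasurableSpace.comap_mapNatBool, MeasurableSpace.comap_id]
  obtain ⟨t, ht, rfl⟩ : MeasurableSet[MeasurableSpace.comap (Prod.map φ id) inferInstance] s :=
    by rwa [hcomap]
  have himage : Prod.fst '' (Prod.map φ id ⁻¹' t) = φ ⁻¹' (Prod.fst '' t) := by
    ext ω
    constructor
    · rintro ⟨⟨ω', x⟩, h, rfl⟩
      exact ⟨(φ ω', x), h, rfl⟩
    · rintro ⟨⟨b, x⟩, h, rfl⟩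
      exact ⟨(ω, x), h, rfl⟩
  rw [himage]
  exact (((ht.analyticSet_image measurable_fst).nullMeasurableSet (μ.map φ)).preimage
    (hφ.quasiMeasurePreserving μ)).measurable_of_complete

end Projection

section Covering

@[simp]
lemma fib_iUnion {ι : Sort*} (s : ι → Set (Ω × W)) (ω : Ω) :
    fib (⋃ i, s i) ω = ⋃ i, fib (s i) ω := by
  ext
  simp [fib]

lemma coverNum_le_max_card {S : Set (Ω × W)} {R : Set (Set (Ω × W))} {ω : Ω}
    {F : Finset (Set (Ω × W))} (hFR : ↑F ⊆ R) (hF : fib S ω ⊆ ⋃ u ∈ F, fib u ω) :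
    coverNum S R ω ≤ max 1 F.card :=
  max_le_max le_rfl (Nat.sInf_le ⟨F, hFR, rfl, hF⟩)

lemma coverNum_le_iff {S : Set (Ω × W)} {R : Set (Set (Ω × W))} {ω : Ω} {n : ℕ} (hn : 1 ≤ n)
    (hcov : ∃ F : Finset (Set (Ω × W)), ↑F ⊆ R ∧ fib S ω ⊆ ⋃ u ∈ F, fib u ω) :
    coverNum S R ω ≤ n ↔
      ∃ F : Finset (Set (Ω × W)), ↑F ⊆ R ∧ F.card ≤ n ∧ fib S ω ⊆ ⋃ u ∈ F, fib u ω := by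
  constructor
  · intro h
    obtain ⟨F₀, hF₀R, hF₀⟩ := hcov
    have hne : {m : ℕ | ∃ F : Finset (Set (Ω × W)), ↑F ⊆ R ∧ F.card = m ∧
        fib S ω ⊆ ⋃ u ∈ F, fib u ω}.Nonempty := ⟨_, F₀, hF₀R, rfl, hF₀⟩
    obtain ⟨F, hFR, hFcard, hF⟩ := Nat.sInf_mem hne
    exact ⟨F, hFR, hFcard ▸ (le_max_right _ _).trans h, hF⟩
  · rintro ⟨F, hFR, hFn, hF⟩
    exact (coverNum_le_max_card hFR hF).trans (max_le hn hFn)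

lemma relCoverNum_le_iff {R Q : Set (Set (Ω × W))} {ω : Ω} {K n : ℕ}
    (hK : ∀ q ∈ Q, coverNum q R ω ≤ K) :
    relCoverNum R Q ω ≤ n ↔ ∀ q ∈ Q, coverNum q R ω ≤ n := by
  refine ⟨fun h q hq => ?_, fun h => ciSup_le' fun q => ciSup_le' fun hq => h q hq⟩
  have hbdd : BddAbove (range fun q => ⨆ _ : q ∈ Q, coverNum q R ω) :=
    ⟨K, forall_mem_range.2 fun q => ciSup_le' fun hq => hK q hq⟩
  calc coverNum q R ω = ⨆ _ : q ∈ Q, coverNum q R ω :=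
        (ciSup_pos (f := fun _ => coverNum q R ω) hq).symm
    _ ≤ relCoverNum R Q ω := le_ciSup hbdd q
    _ ≤ n := h

variable {X : Type*} [MeasurableSpace Ω] [MeasurableSpace.CountablyGenerated Ω]
  [TopologicalSpace X] [PolishSpace X] [MeasurableSpace X] [BorelSpace X]
  (μ : Measure Ω) [IsFiniteMeasure μ] [μ.IsComplete]

include μ in
lemma measurableSet_setOf_fib_subset {s t : Set (Ω × X)} (hs : MeasurableSet s)
    (ht : MeasurableSet t) : MeasurableSet {ω | fib s ω ⊆ fib t ω} := by
  have hcompl : {ω | fib s ω ⊆ fib t ω} = (Prod.fst '' (s \ t))ᶜ := by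
    ext ω
    simp [fib, subset_def]
  rw [hcompl]
  exact (measurableSet_image_fst_of_isComplete μ (hs.diff ht)).compl

include μ in
lemma measurableSet_setOf_coverNum_le {S : Set (Ω × X)} {R : Set (Set (Ω × X))}
    (hRfin : R.Finite) (hRmeas : ∀ r ∈ R, MeasurableSet r) (hS : MeasurableSet S)
    (hcov : ∀ ω, ∃ F : Finset (Set (Ω × X)), ↑F ⊆ R ∧ fib S ω ⊆ ⋃ u ∈ F, fib u ω) (n : ℕ) :
    MeasurableSet {ω | coverNum S R ω ≤ n} := by
  rcases Nat.eq_zero_or_pos n with rfl | hn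
  · convert MeasurableSet.empty
    exact eq_empty_of_forall_notMem fun ω h => by simp [coverNum] at h
  have hfin : {F : Finset (Set (Ω × X)) | ↑F ⊆ R ∧ F.card ≤ n}.Finite :=
    (hRfin.finite_subsets.preimage Finset.coe_injective.injOn).subset fun F hF => hF.1
  have hunion : {ω | coverNum S R ω ≤ n} =
      ⋃ F ∈ {F : Finset (Set (Ω × X)) | ↑F ⊆ R ∧ F.card ≤ n},
        {ω | fib S ω ⊆ fib (⋃ u ∈ F, u) ω} := by
    ext ω
    simp [coverNum_le_iff hn (hcov ω), and_assoc]
  rw [hunion]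
  exact .biUnion hfin.countable fun F hF => measurableSet_setOf_fib_subset μ hS
    (F.measurableSet_biUnion fun u hu => hRmeas u (hF.1 hu))

end Covering

theorem measurable_relCoverNum_general
    {Ω X : Type*} [MeasurableSpace Ω] [MeasurableSpace.CountablyGenerated Ω]
    [MetricSpace X] [CompactSpace X] [MeasurableSpace X] [BorelSpace X]
    (P : Measure Ω) [IsProbabilityMeasure P] (hP : P.IsComplete)
    (E : Set (Ω × X))
    (R Q : Set (Set (Ω × X))) (hRfin : R.Finite)
    (hR : IsOpenRandomCover P E R) (hQ : IsRandomCover E Q) :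
    Measurable fun ω => relCoverNum R Q ω := by
  obtain ⟨⟨-, hRmeas, -, hRcov⟩, -⟩ := hR
  obtain ⟨hQcnt, hQmeas, hQsub, -⟩ := hQ
  have hcov : ∀ q ∈ Q, ∀ ω, fib q ω ⊆ ⋃ u ∈ hRfin.toFinset, fib u ω := fun q hq ω x hx => by
    simpa using hRcov ω (hQsub q hq hx)
  have hbound : ∀ q ∈ Q, ∀ ω, coverNum q R ω ≤ max 1 hRfin.toFinset.card := fun q hq ω =>
    coverNum_le_max_card (by simp) (hcov q hq ω)
  refine measurable_of_Iic fun n => ?_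
  have hsublevel : (fun ω => relCoverNum R Q ω) ⁻¹' Iic n =
      ⋂ q ∈ Q, {ω | coverNum q R ω ≤ n} := by
    ext ω
    simpa using relCoverNum_le_iff (hbound · · ω)
  rw [hsublevel]
  exact .biInter hQcnt fun q hq => measurableSet_setOf_coverNum_le P hRfin hRmeas (hQmeas q hq)
    (fun ω => ⟨_, by simp, hcov q hq ω⟩) n

/-- the function `ω ↦ N(R | Q)(ω)` is measurable. -/
theorem measurable_relCoverNum
    {Ω X : Type*} [MeasurableSpace Ω] [MeasurableSpace.CountablyGenerated Ω]
    [MetricSpace X] [CompactSpace X] [MeasurableSpace X] [BorelSpace X]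
    (P : Measure Ω) [IsProbabilityMeasure P] (hP : P.IsComplete)
    (E : Set (Ω × X)) (hE : MeasurableSet E) (hEc : ∀ ω, IsCompact (fib E ω))
    (R Q : Set (Set (Ω × X))) (hRfin : R.Finite)
    (hR : IsOpenRandomCover P E R) (hQ : IsRandomCover E Q) :
    Measurable fun ω => relCoverNum R Q ω :=
  measurable_relCoverNum_general P hP E R Q hRfin hR hQ

end RelTail
end

section
/- Given ε > 0 and k ∈ ℕ, there exists δ = δ(ε,k) > 0 such that for any probability measure μ: if a measurable partition P δ-contains a finite measurable partition Q with k elements, then the conditional entropy satisfies H_μ(Q | P) < ε. -/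
open MeasureTheory Set Filter Topology
open scoped ENNReal

namespace RelTail

variable {Ω W : Type*}

/-- A countable measurable partition, indexed by `ℕ` (empty members allowed). -/
def IsPartitionIdx {Z : Type*} [MeasurableSpace Z] (Q : ℕ → Set Z) : Prop :=
  (∀ i, MeasurableSet (Q i)) ∧ (Pairwise fun i j => Disjoint (Q i) (Q j)) ∧
    (⋃ i, Q i) = Set.univ

/-- `H_μ(Q | P) = -∑_{i,j} μ(Q_i ∩ P_j) log (μ(Q_i ∩ P_j) / μ(P_j))`. -/
noncomputable def condEntropyIdx {Z : Type*} [MeasurableSpace Z] (μ : Measure Z)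
    (Q Pp : ℕ → Set Z) : ℝ :=
  -∑' p : ℕ × ℕ, (μ (Q p.1 ∩ Pp p.2)).toReal *
      (Real.log (μ (Q p.1 ∩ Pp p.2)).toReal - Real.log (μ (Pp p.2)).toReal)

/-- The partition `P` δ-contains the partition `Q` if there is a partition `R` coarser
than `P` and an ordering of `R` with `∑_i μ(R*_i △ Q*_i) < δ`. -/
def DeltaContains {Z : Type*} [MeasurableSpace Z] (μ : Measure Z) (Pp Q : ℕ → Set Z)
    (δ : ℝ) : Prop :=
  ∃ R : ℕ → Set Z, IsPartitionIdx R ∧ (∀ i, ∃ j, Pp i ⊆ R j) ∧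
    ∃ e : Equiv.Perm ℕ, (∑' i, μ (symmDiff (R (e i)) (Q i))) < ENNReal.ofReal δ

universe u

/-- given `ε > 0` and `k ∈ ℕ` there is `δ > 0` such that for every
probability measure `μ`, if a measurable partition `P` δ-contains a finite measurable
partition `Q` with (at most) `k` elements, then `H_μ(Q|P) < ε`. -/
theorem condEntropy_lt_of_deltaContains (ε : ℝ) (hε : 0 < ε) (k : ℕ) :
    ∃ δ > (0 : ℝ), ∀ (Z : Type u) (mZ : MeasurableSpace Z) (μ : Measure Z),
      IsProbabilityMeasure μ →
      ∀ Pp Q : ℕ → Set Z, IsPartitionIdx Pp → IsPartitionIdx Q →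
        (∀ i, k ≤ i → Q i = ∅) → DeltaContains μ Pp Q δ →
        condEntropyIdx μ Q Pp < ε := by
  have hL1 : (1:ℝ) ≤ max 1 ((2 * k + 2) / ε) := le_max_left _ _
  set L : ℝ := max 1 ((2 * k + 2) / ε) with hLdef
  have hLpos : (0:ℝ) < L := lt_of_lt_of_le one_pos hL1
  have hlogL : 0 ≤ Real.log L := Real.log_nonneg hL1
  have hkL : (k : ℝ) / L < ε / 2 := by
    have h2 : (2 * (k:ℝ) + 2) / ε ≤ L := le_max_right _ _
    have h3 : 2 * (k:ℝ) + 2 ≤ ε * L := by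
      have h4 := mul_le_mul_of_nonneg_left h2 hε.le
      have h5 : ε * ((2 * (k:ℝ) + 2) / ε) = 2 * (k:ℝ) + 2 := by
        field_simp
      linarith
    rw [div_lt_div_iff₀ hLpos two_pos]
    linarith
  set A : ℝ := 1 + Real.log L with hAdef
  have hA : 0 < A := by rw [hAdef]; linarith
  set δ : ℝ := ε / (2 * A + 1) with hδdef
  have hδ : 0 < δ := div_pos hε (by linarith)
  have hδA : δ * A < ε / 2 := by
    rw [hδdef, div_mul_eq_mul_div, div_lt_div_iff₀ (by linarith) two_pos]
    nlinarith
  clear_value L A δ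
  refine ⟨δ, hδ, ?_⟩
  intro Z mZ μ hμ Pp Q hP hQ hQk hDC
  haveI := hμ
  obtain ⟨R, hRpart, hcoarse, e, hsumδ⟩ := hDC
  obtain ⟨hPm, hPd, hPu⟩ := hP
  obtain ⟨hQm, -, -⟩ := hQ
  obtain ⟨hRm, hRd, -⟩ := hRpart
  choose σ hσ using hcoarse
  have hfin : ∀ s : Set Z, μ s ≠ ∞ := fun s => measure_ne_top μ s
  set g : ℕ × ℕ → ℝ := fun p => (μ (Q p.1 ∩ Pp p.2)).toReal *
      (Real.log (μ (Q p.1 ∩ Pp p.2)).toReal - Real.log (μ (Pp p.2)).toReal) with hgdef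
  have hCE : condEntropyIdx μ Q Pp = -∑' p : ℕ × ℕ, g p := rfl
  by_cases hgs : Summable g
  swap
  · rw [hCE, tsum_eq_zero_of_not_summable hgs, neg_zero]; exact hε
  rw [hCE, ← tsum_neg]
  have hPtsum : (∑' j, μ (Pp j)) = 1 := by
    rw [← measure_iUnion hPd hPm, hPu, measure_univ]
  have hytsum : ∑' j, (μ (Pp j)).toReal = 1 := by
    rw [← ENNReal.tsum_toReal_eq (fun _ => hfin _), hPtsum, ENNReal.toReal_one]
  have hysumm : Summable fun j => (μ (Pp j)).toReal :=
    ENNReal.summable_toReal (by rw [hPtsum]; exact ENNReal.one_ne_top)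
  -- key per-row estimate
  have key : ∀ i, i < k → (∑' j, -(g (i, j))) ≤
      (μ (R (e i) \ Q i)).toReal + 1 / L + Real.log L * (μ (Q i \ R (e i))).toReal := by
    intro i _
    set A1 : ℕ → Set Z := fun j => if σ j = e i then Pp j \ Q i else ∅ with hA1def
    set A3 : ℕ → Set Z := fun j => if σ j = e i then (∅ : Set Z) else Q i ∩ Pp j with hA3def
    have hA1m : ∀ j, MeasurableSet (A1 j) := by
      intro j; simp only [hA1def]; split_ifs
      exacts [(hPm j).diff (hQm i), MeasurableSet.empty]
    have hA3m : ∀ j, MeasurableSet (A3 j) := by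
      intro j; simp only [hA3def]; split_ifs
      exacts [MeasurableSet.empty, (hQm i).inter (hPm j)]
    have hA1P : ∀ j, A1 j ⊆ Pp j := by
      intro j; simp only [hA1def]; split_ifs
      exacts [diff_subset, empty_subset _]
    have hA3P : ∀ j, A3 j ⊆ Pp j := by
      intro j; simp only [hA3def]; split_ifs
      exacts [empty_subset _, inter_subset_right]
    have hA1d : Pairwise (Function.onFun Disjoint A1) :=
      fun a b hab => (hPd hab).mono (hA1P a) (hA1P b)
    have hA3d : Pairwise (Function.onFun Disjoint A3) :=
      fun a b hab => (hPd hab).mono (hA3P a) (hA3P b)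
    have hA1sub : ∀ j, A1 j ⊆ R (e i) \ Q i := by
      intro j; simp only [hA1def]; split_ifs with hd
      · exact diff_subset_diff_left (hd ▸ hσ j)
      · exact empty_subset _
    have hA3sub : ∀ j, A3 j ⊆ Q i \ R (e i) := by
      intro j; simp only [hA3def]; split_ifs with hd
      · exact empty_subset _
      · intro z hz
        exact ⟨hz.1, fun hzR => (Set.disjoint_left.mp (hRd hd)) (hσ j hz.2) hzR⟩
    have hU1 : (∑' j, μ (A1 j)) = μ (⋃ j, A1 j) := (measure_iUnion hA1d hA1m).symm
    have hU3 : (∑' j, μ (A3 j)) = μ (⋃ j, A3 j) := (measure_iUnion hA3d hA3m).symm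
    have h1top : (∑' j, μ (A1 j)) ≠ ∞ := by rw [hU1]; exact hfin _
    have h3top : (∑' j, μ (A3 j)) ≠ ∞ := by rw [hU3]; exact hfin _
    have hS1 : Summable fun j => (μ (A1 j)).toReal := ENNReal.summable_toReal h1top
    have hS3' : Summable fun j => (μ (A3 j)).toReal := ENNReal.summable_toReal h3top
    have hS2 : Summable fun j => (μ (Pp j)).toReal / L := hysumm.div_const L
    have hS3 : Summable fun j => Real.log L * (μ (A3 j)).toReal := hS3'.mul_left _
    have hFi : Summable fun j => -(g (i, j)) := (hgs.prod_factor i).neg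
    have hpt : ∀ j, -(g (i, j)) ≤
        (μ (A1 j)).toReal + (μ (Pp j)).toReal / L + Real.log L * (μ (A3 j)).toReal := by
      intro j
      set x : ℝ := (μ (Q i ∩ Pp j)).toReal with hxdef
      set y : ℝ := (μ (Pp j)).toReal with hydef
      have hx0 : 0 ≤ x := ENNReal.toReal_nonneg
      have hy0 : 0 ≤ y := ENNReal.toReal_nonneg
      have hxy : x ≤ y := ENNReal.toReal_mono (hfin _) (measure_mono inter_subset_right)
      have hgij : -(g (i, j)) = x * (Real.log y - Real.log x) := by
        simp only [hgdef, hxdef, hydef]; ring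
      rw [hgij]
      simp only [hA1def, hA3def]
      split_ifs with hd
      · -- diagonal case
        simp only [measure_empty, ENNReal.toReal_zero, mul_zero, add_zero]
        have hyd : y = x + (μ (Pp j \ Q i)).toReal := by
          rw [hxdef, hydef, inter_comm, ← ENNReal.toReal_add (hfin _) (hfin _),
            measure_inter_add_diff (Pp j) (hQm i)]
        rcases hx0.lt_or_eq with hx | hx
        · have hy : 0 < y := lt_of_lt_of_le hx hxy
          have hlog : Real.log y - Real.log x ≤ y / x - 1 := by
            rw [← Real.log_div hy.ne' hx.ne']
            exact Real.log_le_sub_one_of_pos (div_pos hy hx)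
          have h1 : x * (Real.log y - Real.log x) ≤ x * (y / x - 1) :=
            mul_le_mul_of_nonneg_left hlog hx0
          have h2 : x * (y / x - 1) = y - x := by field_simp
          have h3 : 0 ≤ y / L := div_nonneg hy0 hLpos.le
          linarith
        · rw [← hx, zero_mul]
          exact add_nonneg ENNReal.toReal_nonneg (div_nonneg hy0 hLpos.le)
      · -- off-diagonal case
        simp only [measure_empty, ENNReal.toReal_zero, zero_add]
        rw [← hxdef]
        rcases hx0.lt_or_eq with hx | hx
        · have hy : 0 < y := lt_of_lt_of_le hx hxy
          have h1 : Real.log (y / x / L) ≤ y / x / L - 1 :=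
            Real.log_le_sub_one_of_pos (by positivity)
          have h2 : Real.log (y / x) = Real.log (y / x / L) + Real.log L := by
            rw [Real.log_div (ne_of_gt (div_pos hy hx)) hLpos.ne']; ring
          have h3 : Real.log y - Real.log x = Real.log (y / x) :=
            (Real.log_div hy.ne' hx.ne').symm
          have h4 : x * (y / x / L) = y / L := by
            field_simp
          have h5 : x * (Real.log y - Real.log x) ≤ x * (y / x / L - 1 + Real.log L) := by
            apply mul_le_mul_of_nonneg_left _ hx0
            rw [h3, h2]; linarith
          have h6 : x * (y / x / L - 1 + Real.log L) = y / L - x + x * Real.log L := by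
            rw [mul_add, mul_sub, h4]
            ring
          have h7 : Real.log L * x = x * Real.log L := mul_comm _ _
          linarith
        · rw [← hx, zero_mul, mul_zero, add_zero]
          exact div_nonneg hy0 hLpos.le
    calc (∑' j, -(g (i, j)))
        ≤ ∑' j, ((μ (A1 j)).toReal + (μ (Pp j)).toReal / L
            + Real.log L * (μ (A3 j)).toReal) :=
          Summable.tsum_le_tsum hpt hFi ((hS1.add hS2).add hS3)
      _ = (∑' j, (μ (A1 j)).toReal) + (∑' j, (μ (Pp j)).toReal / L)
            + ∑' j, Real.log L * (μ (A3 j)).toReal := by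
          rw [Summable.tsum_add (hS1.add hS2) hS3, Summable.tsum_add hS1 hS2]
      _ ≤ (μ (R (e i) \ Q i)).toReal + 1 / L + Real.log L * (μ (Q i \ R (e i))).toReal := by
          have e1 : (∑' j, (μ (A1 j)).toReal) ≤ (μ (R (e i) \ Q i)).toReal := by
            rw [← ENNReal.tsum_toReal_eq (fun _ => hfin _), hU1]
            exact ENNReal.toReal_mono (hfin _) (measure_mono (iUnion_subset hA1sub))
          have e2 : (∑' j, (μ (Pp j)).toReal / L) = 1 / L := by
            rw [tsum_div_const, hytsum]
          have e3 : (∑' j, Real.log L * (μ (A3 j)).toReal)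
              ≤ Real.log L * (μ (Q i \ R (e i))).toReal := by
            rw [tsum_mul_left]
            refine mul_le_mul_of_nonneg_left ?_ hlogL
            rw [← ENNReal.tsum_toReal_eq (fun _ => hfin _), hU3]
            exact ENNReal.toReal_mono (hfin _) (measure_mono (iUnion_subset hA3sub))
          linarith
  -- assemble
  have hzero : ∀ i ∉ Finset.range k, (∑' j, -(g (i, j))) = 0 := by
    intro i hi
    have hi' : k ≤ i := by simpa using hi
    have hz : ∀ j, -(g (i, j)) = 0 := by
      intro j; simp [hgdef, hQk i hi']
    simp only [hz, tsum_zero]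
  have hsplit : (∑' p : ℕ × ℕ, -(g p)) = ∑' (i) (j), -(g (i, j)) :=
    Summable.tsum_prod' hgs.neg fun b => (hgs.prod_factor b).neg
  rw [hsplit, tsum_eq_sum hzero]
  set D : ℝ := ∑ i ∈ Finset.range k, (μ (symmDiff (R (e i)) (Q i))).toReal with hDdef
  have hD0 : 0 ≤ D := Finset.sum_nonneg fun _ _ => ENNReal.toReal_nonneg
  have hDδ : D < δ := by
    have h1 : (∑ i ∈ Finset.range k, μ (symmDiff (R (e i)) (Q i))) < ENNReal.ofReal δ :=
      lt_of_le_of_lt (ENNReal.sum_le_tsum _) hsumδ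
    have h2 := ENNReal.toReal_lt_of_lt_ofReal h1
    rwa [ENNReal.toReal_sum (fun a _ => hfin _)] at h2
  have hbound : (∑ i ∈ Finset.range k, ∑' j, -(g (i, j)))
      ≤ D + (k : ℝ) / L + Real.log L * D := by
    calc (∑ i ∈ Finset.range k, ∑' j, -(g (i, j)))
        ≤ ∑ i ∈ Finset.range k, ((μ (R (e i) \ Q i)).toReal + 1 / L
            + Real.log L * (μ (Q i \ R (e i))).toReal) :=
          Finset.sum_le_sum fun i hi => key i (Finset.mem_range.mp hi)
      _ ≤ ∑ i ∈ Finset.range k, ((μ (symmDiff (R (e i)) (Q i))).toReal + 1 / L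
            + Real.log L * (μ (symmDiff (R (e i)) (Q i))).toReal) := by
          refine Finset.sum_le_sum fun i _ => ?_
          have m1 : (μ (R (e i) \ Q i)).toReal ≤ (μ (symmDiff (R (e i)) (Q i))).toReal :=
            ENNReal.toReal_mono (hfin _)
              (measure_mono (by rw [Set.symmDiff_def]; exact subset_union_left))
          have m2 : (μ (Q i \ R (e i))).toReal ≤ (μ (symmDiff (R (e i)) (Q i))).toReal :=
            ENNReal.toReal_mono (hfin _)
              (measure_mono (by rw [Set.symmDiff_def]; exact subset_union_right))
          have := mul_le_mul_of_nonneg_left m2 hlogL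
          linarith
      _ = D + (k : ℝ) / L + Real.log L * D := by
          rw [Finset.sum_add_distrib, Finset.sum_add_distrib, ← Finset.mul_sum, ← hDdef,
            Finset.sum_const, Finset.card_range, nsmul_eq_mul]
          ring
  have hfinal : D + (k : ℝ) / L + Real.log L * D < ε := by
    have hmul : D * A < δ * A := mul_lt_mul_of_pos_right hDδ hA
    have hAe : D + Real.log L * D = D * A := by rw [hAdef]; ring
    linarith
  linarith

end RelTail
end
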